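/- In a conilpotent Lie bialgebra g with canonical filtration g_k, the bracket satisfies [g_i, g_j] ⊆ g_{i+j-1}. -/

import Mathlib

/-! Since `δ^n` always applies `δ` to the first tensor leg, `δ^(n+1) = (δ^n ⊗ id) ∘ δ` up to
reassociation, so over a field `g_(n+1) = δ⁻¹ (g_n ⊗ g)`. For `x ∈ g_(i+1)`, `y ∈ g_(j+1)` the
cocycle identity `δ[x,y] = x·δy - y·δx` and `x·(g_j ⊗ g) ⊆ [x, g_j] ⊗ g + g_j ⊗ g` reduce
`[x,y] ∈ g_(i+j+1)` to `[x, g_j] ⊆ g_(i+j)` and `[y, g_i] ⊆ g_(i+j)`, which hold by induction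
on `i + j`. -/

/- Iterated cobracket machinery: `Tpow K V n` is the (n+1)-fold tensor power of `V`,
`iterCo δ n` is the n-fold iterated cobracket `δ^n = (δ ⊗ id^{⊗(n-1)}) ∘ δ^{n-1}`. -/

open TensorProduct

variable (K : Type) [Field K] (V : Type) [AddCommGroup V] [Module K V]

noncomputable def Tpow : ℕ → ModuleCat K
  | 0 => ModuleCat.of K V
  | n + 1 => ModuleCat.of K (V ⊗[K] Tpow n)

variable {K V}

noncomputable def applyFirst (δ : V →ₗ[K] V ⊗[K] V) : (n : ℕ) → (Tpow K V n →ₗ[K] Tpow K V (n + 1))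
  | 0 => δ
  | n + 1 =>
    show (V ⊗[K] Tpow K V n) →ₗ[K] (V ⊗[K] (V ⊗[K] Tpow K V n)) from
      (TensorProduct.assoc K V V (Tpow K V n)).toLinearMap.comp
        (TensorProduct.map δ LinearMap.id)

/-- `iterCo δ n = δ^n`, with `δ^0 = id` and `δ^1 = δ`. -/
noncomputable def iterCo (δ : V →ₗ[K] V ⊗[K] V) : (n : ℕ) → (V →ₗ[K] Tpow K V n)
  | 0 => show V →ₗ[K] V from LinearMap.id
  | n + 1 => (applyFirst δ n).comp (iterCo δ n)

/-- Signed cyclic permutation `x ⊗ (y ⊗ z) ↦ z ⊗ (x ⊗ y)` on the triple tensor power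
(3-cycles have sign +1). -/
noncomputable def cyc3 : (V ⊗[K] (V ⊗[K] V)) ≃ₗ[K] (V ⊗[K] (V ⊗[K] V)) :=
  (TensorProduct.assoc K V V V).symm.trans (TensorProduct.comm K (V ⊗[K] V) V)

/-- `(δ ⊗ id) ∘ δ : V → V ⊗ (V ⊗ V)` (after reassociating). -/
noncomputable def coJacMap (δ : V →ₗ[K] V ⊗[K] V) : V →ₗ[K] (V ⊗[K] (V ⊗[K] V)) :=
  (TensorProduct.assoc K V V V).toLinearMap ∘ₗ (TensorProduct.map δ LinearMap.id) ∘ₗ δ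

/-- Adjoint action of `a` on `V ⊗ V`: `a · (x ⊗ y) = [a,x] ⊗ y + x ⊗ [a,y]`. -/
noncomputable def adAct (B : V →ₗ[K] V →ₗ[K] V) (a : V) : (V ⊗[K] V) →ₗ[K] (V ⊗[K] V) :=
  TensorProduct.map (B a) LinearMap.id + TensorProduct.map LinearMap.id (B a)

noncomputable def tpowSuccEquiv : (n : ℕ) → Tpow K V n ⊗[K] V ≃ₗ[K] Tpow K V (n + 1)
  | 0 => LinearEquiv.refl K (V ⊗[K] V)
  | n + 1 =>
    show (V ⊗[K] Tpow K V n) ⊗[K] V ≃ₗ[K] V ⊗[K] (V ⊗[K] Tpow K V n) from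
      (TensorProduct.assoc K V (Tpow K V n) V).trans
        (TensorProduct.congr (LinearEquiv.refl K V) (tpowSuccEquiv n))

lemma assoc_tmul_tpowSuccEquiv (n : ℕ) (u : V ⊗[K] V) (s : Tpow K V n) (w : V) :
    TensorProduct.assoc K V V (Tpow K V (n + 1)) (u ⊗ₜ[K] tpowSuccEquiv n (s ⊗ₜ[K] w))
      = tpowSuccEquiv (n + 2)
          ((show Tpow K V (n + 2) from TensorProduct.assoc K V V (Tpow K V n) (u ⊗ₜ[K] s))
            ⊗ₜ[K] w) := by
  have h : (TensorProduct.assoc K V V (Tpow K V (n + 1))).toLinearMap ∘ₗ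
        (TensorProduct.mk K (V ⊗[K] V) (Tpow K V (n + 1))).flip (tpowSuccEquiv n (s ⊗ₜ[K] w))
      = (tpowSuccEquiv (n + 2)).toLinearMap ∘ₗ (TensorProduct.mk K (Tpow K V (n + 2)) V).flip w ∘ₗ
        (TensorProduct.assoc K V V (Tpow K V n)).toLinearMap ∘ₗ
        (TensorProduct.mk K (V ⊗[K] V) (Tpow K V n)).flip s :=
    TensorProduct.ext' fun _ _ => rfl
  exact LinearMap.congr_fun h u

lemma tpowSuccEquiv_one : tpowSuccEquiv 1 = TensorProduct.assoc K V V V :=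
  LinearEquiv.toLinearMap_injective (TensorProduct.ext_threefold fun _ _ _ => rfl)

lemma applyFirst_comp_tpowSuccEquiv (δ : V →ₗ[K] V ⊗[K] V) :
    ∀ n, applyFirst δ (n + 1) ∘ₗ (tpowSuccEquiv n).toLinearMap
      = (tpowSuccEquiv (n + 1)).toLinearMap ∘ₗ (applyFirst δ n).rTensor V
  | 0 => TensorProduct.ext' fun x y => by
    show TensorProduct.assoc K V V V (δ x ⊗ₜ[K] y) = tpowSuccEquiv 1 (δ x ⊗ₜ[K] y)
    rw [tpowSuccEquiv_one]
    rfl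
  | n + 1 => TensorProduct.ext_threefold (M := V) (N := Tpow K V n) (P := V) fun x s w =>
    assoc_tmul_tpowSuccEquiv n (δ x) s w

lemma iterCo_succ_eq (δ : V →ₗ[K] V ⊗[K] V) :
    ∀ n, iterCo δ (n + 1) = (tpowSuccEquiv n).toLinearMap ∘ₗ (iterCo δ n).rTensor V ∘ₗ δ
  | 0 => by
    show δ ∘ₗ LinearMap.id = LinearMap.id ∘ₗ (LinearMap.id : V →ₗ[K] V).rTensor V ∘ₗ δ
    rw [LinearMap.rTensor_id]
    rfl
  | n + 1 => by
    show applyFirst δ (n + 1) ∘ₗ iterCo δ (n + 1)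
      = (tpowSuccEquiv (n + 1)).toLinearMap ∘ₗ (applyFirst δ n ∘ₗ iterCo δ n).rTensor V ∘ₗ δ
    rw [iterCo_succ_eq δ n, ← LinearMap.comp_assoc, applyFirst_comp_tpowSuccEquiv,
      LinearMap.comp_assoc, ← LinearMap.comp_assoc δ, ← LinearMap.rTensor_comp]

lemma ker_iterCo_zero (δ : V →ₗ[K] V ⊗[K] V) : LinearMap.ker (iterCo δ 0) = ⊥ :=
  LinearMap.ker_id

lemma ker_iterCo_mono (δ : V →ₗ[K] V ⊗[K] V) : Monotone fun n => LinearMap.ker (iterCo δ n) :=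
  monotone_nat_of_le_succ fun n x hx => by
    simp only [LinearMap.mem_ker] at hx ⊢
    exact (congrArg (applyFirst δ n) hx).trans (map_zero _)

/-- Flatness of `V` identifies `ker (δ^n ⊗ id)` with the image of `ker δ^n ⊗ V`. -/
lemma mem_ker_iterCo_succ_iff (δ : V →ₗ[K] V ⊗[K] V) (n : ℕ) (x : V) :
    x ∈ LinearMap.ker (iterCo δ (n + 1)) ↔
      δ x ∈ LinearMap.range ((LinearMap.ker (iterCo δ n)).subtype.rTensor V) := by
  have hexact := Module.Flat.rTensor_exact V (LinearMap.exact_subtype_ker_map (iterCo δ n))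
  rw [← hexact.linearMap_ker_eq, LinearMap.mem_ker, LinearMap.mem_ker, iterCo_succ_eq]
  simp

lemma adAct_tmul (B : V →ₗ[K] V →ₗ[K] V) (a x y : V) :
    adAct B a (x ⊗ₜ[K] y) = B a x ⊗ₜ[K] y + x ⊗ₜ[K] B a y := by
  simp [adAct]

lemma adAct_mem_range_rTensor (B : V →ₗ[K] V →ₗ[K] V) (a : V) {p q : Submodule K V}
    (hpq : p ≤ q) (hBa : ∀ v ∈ p, B a v ∈ q) {t : V ⊗[K] V}
    (ht : t ∈ LinearMap.range (p.subtype.rTensor V)) :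
    adAct B a t ∈ LinearMap.range (q.subtype.rTensor V) := by
  obtain ⟨u, rfl⟩ := ht
  induction u using TensorProduct.induction_on with
  | zero => simp
  | add u u' hu hu' => simpa only [map_add] using add_mem hu hu'
  | tmul v w =>
    rw [LinearMap.rTensor_tmul, Submodule.subtype_apply, adAct_tmul]
    exact add_mem ⟨⟨B a v, hBa v v.2⟩ ⊗ₜ w, rfl⟩ ⟨⟨v, hpq v.2⟩ ⊗ₜ B a w, rfl⟩

theorem bracket_respects_filtration_general
    {K : Type} [Field K] {V : Type} [AddCommGroup V] [Module K V]
    (B : V →ₗ[K] V →ₗ[K] V) (δ : V →ₗ[K] V ⊗[K] V)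
    (hcocycle : ∀ x y : V, δ (B x y) = adAct B x (δ y) - adAct B y (δ x)) :
    ∀ (i j : ℕ) (x y : V), x ∈ LinearMap.ker (iterCo δ i) → y ∈ LinearMap.ker (iterCo δ j) →
      B x y ∈ LinearMap.ker (iterCo δ (i + j - 1)) := by
  intro i j
  induction hN : i + j using Nat.strong_induction_on generalizing i j with
  | _ N ih =>
  intro x y hx hy
  obtain _ | i := i
  · rw [ker_iterCo_zero, Submodule.mem_bot] at hx
    simp [hx]
  obtain _ | j := j
  · rw [ker_iterCo_zero, Submodule.mem_bot] at hy
    simp [hy]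
  have hsmaller {k l : ℕ} {a b : V} (hkl : k + l < N) :=
    ih (k + l) hkl k l rfl a b
  rw [show N - 1 = i + j + 1 by omega, mem_ker_iterCo_succ_iff, hcocycle]
  refine sub_mem (adAct_mem_range_rTensor B x (ker_iterCo_mono δ (by omega)) (fun a ha => ?_)
      ((mem_ker_iterCo_succ_iff δ j y).1 hy))
    (adAct_mem_range_rTensor B y (ker_iterCo_mono δ (by omega)) (fun a ha => ?_)
      ((mem_ker_iterCo_succ_iff δ i x).1 hx))
  · convert hsmaller (by omega) hx ha using 3
    omega
  · convert hsmaller (by omega) hy ha using 3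
    omega

/-- In a conilpotent Lie bialgebra `g` with canonical filtration
`g_k = ker δ^k`, the bracket satisfies `[g_i, g_j] ⊆ g_{i+j-1}`. -/
theorem bracket_respects_filtration
    {K : Type} [Field K] [CharZero K] {V : Type} [AddCommGroup V] [Module K V]
    (B : V →ₗ[K] V →ₗ[K] V) (δ : V →ₗ[K] V ⊗[K] V)
    (hBskew : ∀ x y : V, B x y = - B y x)
    (hJac : ∀ x y z : V, B (B x y) z + B (B y z) x + B (B z x) y = 0)
    (hδskew : ∀ x : V, TensorProduct.comm K V V (δ x) = - δ x)
    (hcoJac : ∀ x : V, coJacMap δ x + cyc3 (coJacMap δ x) + cyc3 (cyc3 (coJacMap δ x)) = 0)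
    (hcocycle : ∀ x y : V, δ (B x y) = adAct B x (δ y) - adAct B y (δ x))
    (hexh : ∀ x : V, ∃ n : ℕ, iterCo δ n x = 0)
    (hfd : ∀ n : ℕ, FiniteDimensional K (LinearMap.ker (iterCo δ n))) :
    ∀ (i j : ℕ) (x y : V), x ∈ LinearMap.ker (iterCo δ i) → y ∈ LinearMap.ker (iterCo δ j) →
      B x y ∈ LinearMap.ker (iterCo δ (i + j - 1)) :=
  bracket_respects_filtration_general B δ hcocycle
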